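/- Let h : ℂ → ℂ be a nonzero entire function of exponential type, i.e., there exist constants C ≥ 0 and τ ≥ 0 with |h(z)| ≤ C·e^{τ|z|} for all z ∈ ℂ. If the zero set of h is finite, then there exist a polynomial P with complex coefficients and λ ∈ ℂ such that h(z) = P(z)·e^{λz} for all z ∈ ℂ. -/

import Mathlib

/-!
Dividing out the finitely many zeros of `h` leaves a zero-free entire function `g = e^f`, still of
exponential type because the polynomial factor has norm `≥ 1` far from its roots. Then
`Re f ≤ log C + τ‖z‖`, so `f` grows at most linearly by the Borel–Carathéodory theorem; Cauchy's
estimate makes `f'` bounded, hence constant by Liouville, and `f` is affine.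
-/

open Complex Metric

section Factorization

variable {E : Type*} [NormedAddCommGroup E] [NormedSpace ℂ E] [CompleteSpace E]

theorem Differentiable.iterate_dslope {f : ℂ → E} (hf : Differentiable ℂ f) (z₀ : ℂ) (n : ℕ) :
    Differentiable ℂ ((Function.swap dslope z₀)^[n] f) := by
  induction n generalizing f with
  | zero => exact hf
  | succ n ih =>
    rw [Function.iterate_succ_apply]
    exact ih (differentiableOn_univ.mp
      ((differentiableOn_dslope Filter.univ_mem).mpr hf.differentiableOn))

theorem Differentiable.exists_eq_sub_pow_smul {f : ℂ → E} (hf : Differentiable ℂ f) (hne : f ≠ 0)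
    (z₀ : ℂ) : ∃ (n : ℕ) (g : ℂ → E), Differentiable ℂ g ∧ g z₀ ≠ 0 ∧
      ∀ z, f z = (z - z₀) ^ n • g z := by
  obtain ⟨p, hp⟩ := hf.analyticAt z₀
  have hp0 : p ≠ 0 := by
    rintro rfl
    have hA : AnalyticOnNhd ℂ f Set.univ := hf.differentiableOn.analyticOnNhd isOpen_univ
    exact hne <| Set.eqOn_univ _ _ |>.mp <| hA.eqOn_zero_of_preconnected_of_eventuallyEq_zero
      isPreconnected_univ (Set.mem_univ z₀) (hp.locally_zero_iff.mpr rfl)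
  exact ⟨p.order, _, hf.iterate_dslope z₀ _, hp.iterate_dslope_fslope_ne_zero hp0,
    hp.eq_pow_order_mul_iterate_dslope⟩

end Factorization

theorem Differentiable.exists_eq_prod_sub_mul_of_finite_zeros {h : ℂ → ℂ}
    (hh : Differentiable ℂ h) (hne : h ≠ 0) (hzeros : {z | h z = 0}.Finite) :
    ∃ (s : Multiset ℂ) (g : ℂ → ℂ), Differentiable ℂ g ∧ (∀ z, g z ≠ 0) ∧
      ∀ z, h z = (s.map (z - ·)).prod * g z := by
  suffices ∀ S : Finset ℂ, ∀ h : ℂ → ℂ, Differentiable ℂ h → h ≠ 0 → {z | h z = 0} = S →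
      ∃ (s : Multiset ℂ) (g : ℂ → ℂ), Differentiable ℂ g ∧ (∀ z, g z ≠ 0) ∧
        ∀ z, h z = (s.map (z - ·)).prod * g z from
    this hzeros.toFinset h hh hne hzeros.coe_toFinset.symm
  intro S
  induction S using Finset.induction_on with
  | empty =>
    intro h hh _ hS
    refine ⟨0, h, hh, fun z hz => ?_, by simp⟩
    simpa using hS.subset (show z ∈ {z | h z = 0} from hz)
  | insert a S ha ih =>
    intro h hh hne hS
    obtain ⟨n, h₁, hh₁, hh₁a, hfac⟩ := hh.exists_eq_sub_pow_smul hne a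
    have hzeros₁ : {z | h₁ z = 0} = S := by
      rw [← Set.insert_sdiff_self_of_notMem (Finset.mem_coe.not.mpr ha), ← Finset.coe_insert, ← hS]
      ext w
      rcases eq_or_ne w a with rfl | hwa
      · simp [hh₁a]
      · simp [hfac, hwa, sub_eq_zero]
    obtain ⟨s, g, hg, hg0, hfac₁⟩ :=
      ih h₁ hh₁ (fun h => hh₁a (congrFun h a)) hzeros₁
    refine ⟨Multiset.replicate n a + s, g, hg, hg0, fun z => ?_⟩
    rw [hfac, hfac₁, Multiset.map_add, Multiset.prod_add, Multiset.map_replicate,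
      Multiset.prod_replicate, smul_eq_mul, mul_assoc]

theorem Multiset.exists_one_le_norm_prod_map_sub {𝕜 : Type*} [NormedField 𝕜] (s : Multiset 𝕜) :
    ∃ R, ∀ z : 𝕜, R ≤ ‖z‖ → 1 ≤ ‖(s.map (z - ·)).prod‖ := by
  induction s using Multiset.induction_on with
  | empty => exact ⟨0, fun z _ => by simp⟩
  | cons a s ih =>
    obtain ⟨R, hR⟩ := ih
    refine ⟨max R (‖a‖ + 1), fun z hz => ?_⟩
    have ha : 1 ≤ ‖z - a‖ := by linarith [norm_sub_norm_le z a, le_max_right R (‖a‖ + 1)]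
    rw [Multiset.map_cons, Multiset.prod_cons, norm_mul]
    exact one_le_mul_of_one_le_of_one_le ha (hR z ((le_max_left _ _).trans hz))

theorem Continuous.exists_norm_le_mul_exp {X E : Type*} [NormedAddCommGroup X] [ProperSpace X]
    [SeminormedAddCommGroup E] {g : X → E} (hg : Continuous g) {C τ R : ℝ} (hτ : 0 ≤ τ)
    (hbound : ∀ z, R ≤ ‖z‖ → ‖g z‖ ≤ C * Real.exp (τ * ‖z‖)) :
    ∃ C', ∀ z, ‖g z‖ ≤ C' * Real.exp (τ * ‖z‖) := by
  obtain ⟨K, hK⟩ := (isCompact_closedBall (0 : X) R).exists_bound_of_continuousOn hg.continuousOn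
  refine ⟨max C K, fun z => ?_⟩
  rcases le_total ‖z‖ R with hz | hz
  · have hgK : ‖g z‖ ≤ K := hK z (mem_closedBall_zero_iff.mpr hz)
    have hexp : 1 ≤ Real.exp (τ * ‖z‖) := Real.one_le_exp (by positivity)
    calc ‖g z‖ ≤ max C K := hgK.trans (le_max_right C K)
      _ ≤ max C K * Real.exp (τ * ‖z‖) :=
        le_mul_of_one_le_right ((norm_nonneg _).trans (hgK.trans (le_max_right C K))) hexp
  · exact (hbound z hz).trans (by gcongr; exact le_max_left C K)

theorem exists_differentiable_eq_exp_of_ne_zero {g : ℂ → ℂ} (hg : Differentiable ℂ g)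
    (hg0 : ∀ z, g z ≠ 0) : ∃ f : ℂ → ℂ, Differentiable ℂ f ∧ ∀ z, g z = cexp (f z) := by
  obtain ⟨F, hF⟩ := (hg.deriv.div hg hg0).isExactOn_univ
  have hF' (z : ℂ) := hF z (Set.mem_univ z)
  have hψ : ∀ z, HasDerivAt (fun w => g w * cexp (-F w)) 0 z := by
    intro z
    refine ((hg z).hasDerivAt.fun_mul (hF' z).fun_neg.cexp).congr_deriv ?_
    simp only [Pi.div_apply]
    field_simp [hg0 z]
    ring
  have hconst (z : ℂ) : g z * cexp (-F z) = g 0 * cexp (-F 0) :=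
    is_const_of_deriv_eq_zero (fun w => (hψ w).differentiableAt) (fun w => (hψ w).deriv) z 0
  refine ⟨fun z => F z + log (g 0 * cexp (-F 0)), fun z => (hF' z).differentiableAt.add_const _,
    fun z => ?_⟩
  rw [exp_add, exp_log (mul_ne_zero (hg0 0) (exp_ne_zero _)), ← hconst z, mul_left_comm,
    ← exp_add, add_neg_cancel, exp_zero, mul_one]

section Liouville

variable {E : Type*} [NormedAddCommGroup E] [NormedSpace ℂ E]

theorem isBounded_range_deriv_of_norm_le_add_mul {f : ℂ → E} (hf : Differentiable ℂ f)
    {a b : ℝ} (hb : 0 ≤ b) (hbound : ∀ z, ‖f z‖ ≤ a + b * ‖z‖) :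
    Bornology.IsBounded (Set.range (deriv f)) := by
  have ha : 0 ≤ a := by simpa using (norm_nonneg _).trans (hbound 0)
  refine (isBounded_iff_forall_norm_le).mpr ⟨a + 2 * b, ?_⟩
  rintro _ ⟨c, rfl⟩
  set R := ‖c‖ + 1
  have hR : 1 ≤ R := by simp [R]
  -- Cauchy's estimate on the circle of radius `‖c‖ + 1`, all of whose points have norm `≤ 2R`.
  have hsphere : ∀ w ∈ sphere c R, ‖f w‖ ≤ a + b * (2 * R) := by
    intro w hw
    have : ‖w‖ ≤ 2 * R := by
      calc ‖w‖ ≤ ‖c‖ + ‖w - c‖ := norm_le_norm_add_norm_sub' w c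
        _ ≤ 2 * R := by rw [← dist_eq_norm, mem_sphere.mp hw]; simp [R]; linarith
    exact (hbound w).trans (by gcongr)
  calc ‖deriv f c‖ ≤ (a + b * (2 * R)) / R :=
        norm_deriv_le_of_forall_mem_sphere_norm_le (by linarith) hf.diffContOnCl hsphere
    _ ≤ a + 2 * b := by
        rw [div_le_iff₀ (by linarith)]
        nlinarith

theorem eq_add_smul_deriv_of_norm_le_add_mul [CompleteSpace E] {f : ℂ → E}
    (hf : Differentiable ℂ f) {a b : ℝ} (hb : 0 ≤ b) (hbound : ∀ z, ‖f z‖ ≤ a + b * ‖z‖)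
    (z : ℂ) : f z = f 0 + z • deriv f 0 := by
  have hderiv : ∀ w, deriv f w = deriv f 0 := fun w =>
    hf.deriv.apply_eq_apply_of_bounded (isBounded_range_deriv_of_norm_le_add_mul hf hb hbound) w 0
  have hφ : ∀ w, HasDerivAt (fun w => f w - w • deriv f 0) 0 w := by
    intro w
    simpa [hderiv w] using (hf w).hasDerivAt.fun_sub ((hasDerivAt_id w).smul_const (deriv f 0))
  have := is_const_of_deriv_eq_zero (fun w => (hφ w).differentiableAt) (fun w => (hφ w).deriv) z 0
  simp only [zero_smul, sub_zero] at this
  rw [← this, sub_add_cancel]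

end Liouville

theorem exists_norm_le_add_mul_of_re_le {f : ℂ → ℂ} (hf : Differentiable ℂ f) {A B : ℝ}
    (hB : 0 ≤ B) (hre : ∀ z, (f z).re ≤ A + B * ‖z‖) :
    ∃ a b : ℝ, 0 ≤ b ∧ ∀ z, ‖f z‖ ≤ a + b * ‖z‖ := by
  refine ⟨2 * (|A| + B + 1) + 3 * ‖f 0‖, 4 * B, by positivity, fun z => ?_⟩
  -- Borel–Carathéodory on the disc of radius `2‖z‖ + 1`, where `Re f ≤ |A| + B R + 1`.
  set R := 2 * ‖z‖ + 1
  set M := |A| + B * R + 1 with hM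
  have hz : z ∈ ball (0 : ℂ) R := by simp [R]; linarith [norm_nonneg z]
  have hmaps : Set.MapsTo f (ball 0 R) {w | w.re ≤ M} := fun w hw => by
    have hwR : ‖w‖ < R := mem_ball_zero_iff.mp hw
    have : B * ‖w‖ ≤ B * R := by gcongr
    show (f w).re ≤ M
    linarith [hre w, le_abs_self A]
  have hRz : R - ‖z‖ = ‖z‖ + 1 := by ring
  have h₁ : 2 * M * ‖z‖ / (R - ‖z‖) ≤ 2 * M := by
    rw [hRz, div_le_iff₀ (by positivity)]
    nlinarith [norm_nonneg z, abs_nonneg A]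
  have h₂ : ‖f 0‖ * (R + ‖z‖) / (R - ‖z‖) ≤ 3 * ‖f 0‖ := by
    rw [hRz, div_le_iff₀ (by positivity)]
    nlinarith [norm_nonneg z, norm_nonneg (f 0)]
  calc ‖f z‖ ≤ 2 * M * ‖z‖ / (R - ‖z‖) + ‖f 0‖ * (R + ‖z‖) / (R - ‖z‖) :=
        borelCaratheodory (by positivity) hf.differentiableOn hmaps (by positivity) hz
    _ ≤ 2 * M + 3 * ‖f 0‖ := add_le_add h₁ h₂
    _ = _ := by ring

theorem eq_add_mul_deriv_of_norm_exp_le {f : ℂ → ℂ} (hf : Differentiable ℂ f) {C τ : ℝ}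
    (hτ : 0 ≤ τ) (hbound : ∀ z, ‖cexp (f z)‖ ≤ C * Real.exp (τ * ‖z‖)) (z : ℂ) :
    f z = f 0 + z * deriv f 0 := by
  have hC : 0 < C := by simpa using (norm_pos_iff.mpr (exp_ne_zero (f 0))).trans_le (hbound 0)
  have hre : ∀ z, (f z).re ≤ Real.log C + τ * ‖z‖ := fun z => by
    rw [← Real.exp_le_exp, Real.exp_add, Real.exp_log hC, ← norm_exp]
    exact hbound z
  obtain ⟨a, b, hb, hnorm⟩ := exists_norm_le_add_mul_of_re_le hf hτ hre
  exact eq_add_smul_deriv_of_norm_le_add_mul hf hb hnorm z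

/-- a nonzero entire function `h` of exponential type whose zero set is
finite has the form `h(z) = P(z)·e^{λz}` for a polynomial `P` and some `λ ∈ ℂ`. -/
theorem exp_type_finite_zeros_eq_poly_mul_exp
    (h : ℂ → ℂ) (hdiff : Differentiable ℂ h) (hne : h ≠ 0)
    (htype : ∃ C τ : ℝ, 0 ≤ C ∧ 0 ≤ τ ∧ ∀ z : ℂ, ‖h z‖ ≤ C * Real.exp (τ * ‖z‖))
    (hzeros : {z : ℂ | h z = 0}.Finite) :
    ∃ (P : Polynomial ℂ) (lam : ℂ), ∀ z : ℂ, h z = P.eval z * Complex.exp (lam * z) := by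
  obtain ⟨C, τ, -, hτ, hbound⟩ := htype
  obtain ⟨s, g, hg, hg0, hfac⟩ := hdiff.exists_eq_prod_sub_mul_of_finite_zeros hne hzeros
  obtain ⟨f, hf, hgf⟩ := exists_differentiable_eq_exp_of_ne_zero hg hg0
  obtain ⟨R, hR⟩ := s.exists_one_le_norm_prod_map_sub
  have hg_large : ∀ z, R ≤ ‖z‖ → ‖g z‖ ≤ C * Real.exp (τ * ‖z‖) := fun z hz =>
    calc ‖g z‖ ≤ ‖(s.map (z - ·)).prod‖ * ‖g z‖ := le_mul_of_one_le_left (norm_nonneg _) (hR z hz)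
      _ = ‖h z‖ := by rw [hfac, norm_mul]
      _ ≤ C * Real.exp (τ * ‖z‖) := hbound z
  obtain ⟨C', hC'⟩ := hg.continuous.exists_norm_le_mul_exp hτ hg_large
  have hf_affine := eq_add_mul_deriv_of_norm_exp_le hf hτ (fun z => hgf z ▸ hC' z)
  refine ⟨Polynomial.C (cexp (f 0)) * (s.map (Polynomial.X - Polynomial.C ·)).prod, deriv f 0,
    fun z => ?_⟩
  rw [hfac, hgf, hf_affine z, exp_add, mul_comm z]
  simp [Polynomial.eval_multiset_prod, Multiset.map_map]
  ring
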